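/- arXiv:1906.08241 — 2 statements merged into one kernel-verified Lean document; each statement's English description precedes it below -/
import Mathlib

section
/- Let f : ℝ^d → ℝ be differentiable and M-smooth, i.e. ‖∇f(y) − ∇f(z)‖₂ ≤ M ‖y − z‖₂ for all y, z ∈ ℝ^d, and let z̄ ∈ ℝ^d be a stationary point of f (∇f(z̄) = 0). Let u ∼ s where s is standardized with fourth moment κ = E[u₁⁴] < ∞, let T_w(u) = Cu + m for w = (m, C), and let g = ∇_w f(T_w(u)) be the gradient of w ↦ f(T_w(u)) with respect to all d + d² parameters. Then E‖g‖₂² ≤ M² ((d+1) ‖m − z̄‖₂² + (d+κ) ‖C‖_F²). -/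
noncomputable section

open MeasureTheory ProbabilityTheory
open scoped RealInnerProductSpace

/-- The affine reparameterization map `T_w(u) = C u + m`, where the parameter vector
`w ∈ ℝ^{d+d²}` collects the entries of `m` (at indices `Sum.inl i`) and of `C`
(at indices `Sum.inr (i, j)`). -/
def Tmap {d : ℕ} (w : EuclideanSpace ℝ (Fin d ⊕ Fin d × Fin d))
    (u : EuclideanSpace ℝ (Fin d)) : EuclideanSpace ℝ (Fin d) :=
  (WithLp.equiv 2 _).symm fun i => (∑ j, w (Sum.inr (i, j)) * u j) + w (Sum.inl i)

/-- The parameter vector `w = (m, C) ∈ ℝ^{d+d²}`. -/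
def param {d : ℕ} (m : EuclideanSpace ℝ (Fin d)) (C : Matrix (Fin d) (Fin d) ℝ) :
    EuclideanSpace ℝ (Fin d ⊕ Fin d × Fin d) :=
  (WithLp.equiv 2 _).symm (Sum.elim (fun i => m i) fun p => C p.1 p.2)

/-! The gradient of `w ↦ f (C u + m)` is `(∇f y, ∇f y uᵀ)` with `y = C u + m`, so its
squared norm is `‖∇f y‖² (1 + ‖u‖²)`, and smoothness together with `∇f z̄ = 0` bounds it by
`M² ‖C u + (m - z̄)‖² (1 + ‖u‖²)`. The expectation of this bound is computed exactly, one
row `c · u + a` of `C u + (m - z̄)` at a time: independence and `E u_j = E u_j³ = 0` make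
every `E[u_i u_j (1 + ‖u‖²)]` with `i ≠ j` and every `E[u_j (1 + ‖u‖²)]` vanish, leaving
`E[1 + ‖u‖²] = d + 1` and `E[u_j² (1 + ‖u‖²)] = 1 + κ + (d - 1)`. -/

section Integrability

variable {Ω : Type*} [MeasurableSpace Ω] {μ : Measure Ω}

lemma MeasureTheory.MemLp.mul_of_four {f g : Ω → ℝ} (hf : MemLp f 4 μ) (hg : MemLp g 4 μ) :
    MemLp (fun ω => f ω * g ω) 2 μ := by
  have : ENNReal.HolderTriple 4 4 2 := ⟨by
    rw [← ENNReal.add_halves 2⁻¹]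
    norm_num [ENNReal.div_eq_inv_mul, ← ENNReal.mul_inv]⟩
  exact hg.mul' hf

variable [IsProbabilityMeasure μ] {ι : Type*} [Fintype ι] {X : ι → Ω → ℝ}

lemma memLp_one_add_sum_sq (hX : ∀ k, MemLp (X k) 4 μ) :
    MemLp (fun ω => 1 + ∑ k, X k ω ^ 2) 2 μ := by
  have hsq : ∀ k, MemLp (fun ω => X k ω ^ 2) 2 μ := fun k => by
    simpa only [sq] using (hX k).mul_of_four (hX k)
  exact (memLp_const (1 : ℝ)).add (memLp_finsetSum Finset.univ fun k _ => hsq k)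

lemma integrable_mul_mul_one_add_sum_sq (hX : ∀ k, MemLp (X k) 4 μ) {f g : Ω → ℝ}
    (hf : MemLp f 4 μ) (hg : MemLp g 4 μ) :
    Integrable (fun ω => f ω * g ω * (1 + ∑ k, X k ω ^ 2)) μ :=
  (hf.mul_of_four hg).integrable_mul (memLp_one_add_sum_sq hX)

lemma integral_mul_one_add_sum_sq_of_memLp (hX : ∀ k, MemLp (X k) 4 μ) {f : Ω → ℝ}
    (hf : MemLp f 2 μ) :
    ∫ ω, f ω * (1 + ∑ k, X k ω ^ 2) ∂μ = ∫ ω, f ω ∂μ + ∑ k, ∫ ω, f ω * X k ω ^ 2 ∂μ := by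
  have hfX : ∀ k, Integrable (fun ω => f ω * X k ω ^ 2) μ := fun k =>
    hf.integrable_mul (by simpa only [sq] using (hX k).mul_of_four (hX k))
  simp only [mul_add, mul_one, Finset.mul_sum]
  rw [integral_add (hf.integrable one_le_two) (integrable_finsetSum _ fun k _ => hfX k),
    integral_finsetSum _ fun k _ => hfX k]

end Integrability

lemma sq_sum_mul_add_mul {ι : Type*} [Fintype ι] (c x : ι → ℝ) (a w : ℝ) :
    (∑ j, c j * x j + a) ^ 2 * w =
      ∑ i, ∑ j, c i * c j * (x i * x j * w) + (2 * a * ∑ i, c i * (x i * w) + a ^ 2 * w) := by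
  have hquad : (∑ j, c j * x j) ^ 2 * w = ∑ i, ∑ j, c i * c j * (x i * x j * w) := by
    rw [sq, Finset.sum_mul_sum, Finset.sum_mul]
    refine Finset.sum_congr rfl fun i _ => ?_
    rw [Finset.sum_mul]
    exact Finset.sum_congr rfl fun j _ => by ring
  have hlin : (∑ j, c j * x j) * w = ∑ i, c i * (x i * w) := by
    rw [Finset.sum_mul]
    exact Finset.sum_congr rfl fun i _ => by ring
  rw [← hquad, ← hlin]
  ring

structure IsStandardized {Ω ι : Type*} [MeasurableSpace Ω] (μ : Measure Ω) (X : ι → Ω → ℝ)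
    (κ : ℝ) : Prop where
  measurable : ∀ i, Measurable (X i)
  iIndepFun : iIndepFun X μ
  integral_eq_zero : ∀ i, ∫ ω, X i ω ∂μ = 0
  integral_pow_three : ∀ i, ∫ ω, X i ω ^ 3 ∂μ = 0
  integral_sq : ∀ i, ∫ ω, X i ω ^ 2 ∂μ = 1
  integral_pow_four : ∀ i, ∫ ω, X i ω ^ 4 ∂μ = κ
  memLp_four : ∀ i, MemLp (X i) 4 μ

namespace IsStandardized

variable {Ω ι : Type*} [MeasurableSpace Ω] {μ : Measure Ω} {X : ι → Ω → ℝ} {κ : ℝ}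
  (hX : IsStandardized μ X κ)
include hX

lemma integral_mul_comp_eq_zero {i j k : ι} (hij : i ≠ j) (hik : i ≠ k) {g : ℝ × ℝ → ℝ}
    (hg : Measurable g) : ∫ ω, X i ω * g (X j ω, X k ω) ∂μ = 0 := by
  have hind : IndepFun (X i) (fun ω => g (X j ω, X k ω)) μ :=
    ((hX.iIndepFun.indepFun_prodMk hX.measurable j k i hij.symm hik.symm).comp hg
      measurable_id).symm
  rw [hind.integral_fun_mul_eq_mul_integral (hX.measurable i).aestronglyMeasurable
    (hg.comp ((hX.measurable j).prodMk (hX.measurable k))).aestronglyMeasurable,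
    hX.integral_eq_zero, zero_mul]

lemma integral_mul_of_ne {i j : ι} (hij : i ≠ j) : ∫ ω, X i ω * X j ω ∂μ = 0 :=
  hX.integral_mul_comp_eq_zero hij hij (g := Prod.fst) measurable_fst

lemma integral_mul_sq (i k : ι) : ∫ ω, X i ω * X k ω ^ 2 ∂μ = 0 := by
  rcases eq_or_ne i k with rfl | hik
  · simpa only [← pow_succ'] using hX.integral_pow_three i
  · exact hX.integral_mul_comp_eq_zero hik hik (g := fun p => p.2 ^ 2)
      (measurable_snd.pow_const 2)

lemma integral_mul_mul_sq {i j : ι} (hij : i ≠ j) (k : ι) :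
    ∫ ω, X i ω * X j ω * X k ω ^ 2 ∂μ = 0 := by
  rcases eq_or_ne i k with rfl | hik
  · have h := hX.integral_mul_comp_eq_zero hij.symm hij.symm (g := fun p => p.1 * p.2 ^ 2)
      (measurable_fst.mul (measurable_snd.pow_const 2))
    simpa only [fun ω => show X i ω * X j ω * X i ω ^ 2 = X j ω * (X i ω * X i ω ^ 2) by ring]
      using h
  · have h := hX.integral_mul_comp_eq_zero hij hik (g := fun p => p.1 * p.2 ^ 2)
      (measurable_fst.mul (measurable_snd.pow_const 2))
    simpa only [mul_assoc] using h

lemma integral_sq_mul_sq [DecidableEq ι] (i k : ι) :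
    ∫ ω, X i ω ^ 2 * X k ω ^ 2 ∂μ = if i = k then κ else 1 := by
  rcases eq_or_ne i k with rfl | hik
  · rw [if_pos rfl, ← hX.integral_pow_four i]
    simp only [← pow_add]
  · have hind : IndepFun (fun ω => X i ω ^ 2) (fun ω => X k ω ^ 2) μ :=
      (hX.iIndepFun.indepFun hik).comp (measurable_id.pow_const 2) (measurable_id.pow_const 2)
    rw [if_neg hik, hind.integral_fun_mul_eq_mul_integral
      ((hX.measurable i).pow_const 2).aestronglyMeasurable
      ((hX.measurable k).pow_const 2).aestronglyMeasurable, hX.integral_sq, hX.integral_sq,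
      one_mul]

variable [IsProbabilityMeasure μ] [Fintype ι]

lemma integral_one_add_sum_sq : ∫ ω, (1 + ∑ k, X k ω ^ 2) ∂μ = Fintype.card ι + 1 := by
  have hsq : ∀ k, Integrable (fun ω => X k ω ^ 2) μ := fun k =>
    ((hX.memLp_four k).mono_exponent (by norm_num)).integrable_sq
  rw [integral_add (integrable_const 1) (integrable_finsetSum _ fun k _ => hsq k),
    integral_finsetSum _ fun k _ => hsq k]
  simp [hX.integral_sq, add_comm]

lemma integral_mul_one_add_sum_sq (i : ι) : ∫ ω, X i ω * (1 + ∑ k, X k ω ^ 2) ∂μ = 0 := by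
  rw [integral_mul_one_add_sum_sq_of_memLp hX.memLp_four
    ((hX.memLp_four i).mono_exponent (by norm_num))]
  simp [hX.integral_eq_zero, hX.integral_mul_sq]

lemma integral_mul_mul_one_add_sum_sq [DecidableEq ι] (i j : ι) :
    ∫ ω, X i ω * X j ω * (1 + ∑ k, X k ω ^ 2) ∂μ =
      if i = j then Fintype.card ι + κ else 0 := by
  rw [integral_mul_one_add_sum_sq_of_memLp hX.memLp_four
    ((hX.memLp_four i).mul_of_four (hX.memLp_four j))]
  rcases eq_or_ne i j with rfl | hij
  · simp only [← sq, hX.integral_sq, hX.integral_sq_mul_sq, if_true]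
    have hsplit : ∀ k, (if i = k then κ else 1) = 1 + if i = k then κ - 1 else 0 := fun k => by
      split_ifs <;> ring
    simp only [hsplit, Finset.sum_add_distrib, Finset.sum_ite_eq, Finset.mem_univ, if_true,
      Finset.sum_const, Finset.card_univ, nsmul_eq_mul, mul_one]
    ring
  · simp [hij, hX.integral_mul_of_ne hij, hX.integral_mul_mul_sq hij]

lemma memLp_affine (c : ι → ℝ) (a : ℝ) : MemLp (fun ω => ∑ j, c j * X j ω + a) 4 μ :=
  (memLp_finsetSum _ fun j _ => (hX.memLp_four j).const_mul (c j)).add (memLp_const a)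

lemma integrable_sq_affine_mul_one_add_sum_sq (c : ι → ℝ) (a : ℝ) :
    Integrable (fun ω => (∑ j, c j * X j ω + a) ^ 2 * (1 + ∑ k, X k ω ^ 2)) μ := by
  simpa only [sq] using integrable_mul_mul_one_add_sum_sq hX.memLp_four
    (hX.memLp_affine c a) (hX.memLp_affine c a)

lemma integral_sq_affine_mul_one_add_sum_sq [DecidableEq ι] (c : ι → ℝ) (a : ℝ) :
    ∫ ω, (∑ j, c j * X j ω + a) ^ 2 * (1 + ∑ k, X k ω ^ 2) ∂μ =
      (Fintype.card ι + 1) * a ^ 2 + (Fintype.card ι + κ) * ∑ j, c j ^ 2 := by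
  set W : Ω → ℝ := fun ω => 1 + ∑ k, X k ω ^ 2
  have hXXW : ∀ i j, Integrable (fun ω => X i ω * X j ω * W ω) μ := fun i j =>
    integrable_mul_mul_one_add_sum_sq hX.memLp_four (hX.memLp_four i) (hX.memLp_four j)
  have hXW : ∀ i, Integrable (fun ω => X i ω * W ω) μ := fun i => by
    simpa only [mul_one] using
      integrable_mul_mul_one_add_sum_sq hX.memLp_four (hX.memLp_four i) (memLp_const 1)
  have hW : Integrable W μ := (memLp_one_add_sum_sq hX.memLp_four).integrable one_le_two
  have hquadI : Integrable (fun ω => ∑ i, ∑ j, c i * c j * (X i ω * X j ω * W ω)) μ :=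
    integrable_finsetSum _ fun i _ => integrable_finsetSum _ fun j _ => (hXXW i j).const_mul _
  have hlinI : Integrable (fun ω => 2 * a * ∑ i, c i * (X i ω * W ω)) μ :=
    (integrable_finsetSum _ fun i _ => (hXW i).const_mul _).const_mul _
  have hrestI : Integrable (fun ω => 2 * a * ∑ i, c i * (X i ω * W ω) + a ^ 2 * W ω) μ :=
    hlinI.add (hW.const_mul _)
  rw [integral_congr_ae (ae_of_all _ fun ω => sq_sum_mul_add_mul c (X · ω) a (W ω)),
    integral_add hquadI hrestI,
    integral_add hlinI (hW.const_mul _),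
    integral_finsetSum _ fun i _ => integrable_finsetSum _ fun j _ => (hXXW i j).const_mul _]
  simp only [integral_finsetSum _ fun j _ => (hXXW _ j).const_mul _, integral_const_mul,
    integral_finsetSum _ fun i _ => (hXW i).const_mul _, W, hX.integral_mul_mul_one_add_sum_sq,
    hX.integral_mul_one_add_sum_sq, hX.integral_one_add_sum_sq]
  simp only [mul_ite, mul_zero, Finset.sum_ite_eq, Finset.mem_univ, if_true,
    Finset.sum_const_zero, sq, zero_add]
  rw [← Finset.sum_mul]
  ring

end IsStandardized

section Reparameterization

variable {d : ℕ}

lemma Tmap_apply (w : EuclideanSpace ℝ (Fin d ⊕ Fin d × Fin d)) (v : EuclideanSpace ℝ (Fin d))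
    (i : Fin d) : Tmap w v i = ∑ j, w (Sum.inr (i, j)) * v j + w (Sum.inl i) := rfl

lemma param_apply_inl (m : EuclideanSpace ℝ (Fin d)) (C : Matrix (Fin d) (Fin d) ℝ)
    (i : Fin d) :
    param m C (Sum.inl i) = m i := rfl

lemma param_apply_inr (m : EuclideanSpace ℝ (Fin d)) (C : Matrix (Fin d) (Fin d) ℝ)
    (p : Fin d × Fin d) : param m C (Sum.inr p) = C p.1 p.2 := rfl

lemma Tmap_param_sub (m z : EuclideanSpace ℝ (Fin d)) (C : Matrix (Fin d) (Fin d) ℝ)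
    (v : EuclideanSpace ℝ (Fin d)) : Tmap (param m C) v - z = Tmap (param (m - z) C) v := by
  ext i
  simp only [PiLp.sub_apply, Tmap_apply, param_apply_inl, param_apply_inr]
  ring

lemma norm_sq_param (m : EuclideanSpace ℝ (Fin d)) (C : Matrix (Fin d) (Fin d) ℝ) :
    ‖param m C‖ ^ 2 = ‖m‖ ^ 2 + ∑ i, ∑ j, C i j ^ 2 := by
  simp only [EuclideanSpace.real_norm_sq_eq, Fintype.sum_sum_type, Fintype.sum_prod_type,
    param_apply_inl, param_apply_inr]

def TmapCLM (v : EuclideanSpace ℝ (Fin d)) :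
    EuclideanSpace ℝ (Fin d ⊕ Fin d × Fin d) →L[ℝ] EuclideanSpace ℝ (Fin d) :=
  LinearMap.toContinuousLinearMap
    { toFun := fun w => Tmap w v
      map_add' := fun w w' => by
        ext i
        simp only [Tmap_apply, PiLp.add_apply, add_mul, Finset.sum_add_distrib]
        ring
      map_smul' := fun c w => by
        ext i
        simp only [Tmap_apply, PiLp.smul_apply, smul_eq_mul, RingHom.id_apply, mul_add,
          Finset.mul_sum, mul_assoc] }

lemma TmapCLM_apply (v : EuclideanSpace ℝ (Fin d))
    (w : EuclideanSpace ℝ (Fin d ⊕ Fin d × Fin d)) :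
    TmapCLM v w = Tmap w v := rfl

lemma hasGradientAt_Tmap_comp {f : EuclideanSpace ℝ (Fin d) → ℝ} {g : EuclideanSpace ℝ (Fin d)}
    {w : EuclideanSpace ℝ (Fin d ⊕ Fin d × Fin d)} {v : EuclideanSpace ℝ (Fin d)}
    (hf : HasGradientAt f g (Tmap w v)) :
    HasGradientAt (fun w' => f (Tmap w' v)) (param g (Matrix.of fun i j => g i * v j)) w := by
  rw [hasGradientAt_iff_hasFDerivAt] at hf ⊢
  refine (hf.comp w (TmapCLM v).hasFDerivAt).congr_fderiv ?_
  ext w'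
  simp only [ContinuousLinearMap.comp_apply, InnerProductSpace.toDual_apply_apply,
    PiLp.inner_apply, RCLike.inner_apply, conj_trivial, Fintype.sum_sum_type,
    Fintype.sum_prod_type, TmapCLM_apply, Tmap_apply, param_apply_inl, param_apply_inr,
    Matrix.of_apply, add_mul, Finset.sum_add_distrib, Finset.sum_mul]
  rw [add_comm]
  congr 1
  exact Finset.sum_congr rfl fun i _ => Finset.sum_congr rfl fun j _ => by ring

lemma norm_sq_gradient_Tmap_comp {f : EuclideanSpace ℝ (Fin d) → ℝ}
    {w : EuclideanSpace ℝ (Fin d ⊕ Fin d × Fin d)} {v : EuclideanSpace ℝ (Fin d)}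
    (hf : DifferentiableAt ℝ f (Tmap w v)) :
    ‖gradient (fun w' => f (Tmap w' v)) w‖ ^ 2 =
      ‖gradient f (Tmap w v)‖ ^ 2 * (1 + ‖v‖ ^ 2) := by
  rw [(hasGradientAt_Tmap_comp hf.hasGradientAt).gradient, norm_sq_param]
  simp only [Matrix.of_apply, mul_pow, EuclideanSpace.real_norm_sq_eq, ← Finset.mul_sum,
    ← Finset.sum_mul]
  ring

end Reparameterization

section Bound

variable {Ω : Type*} [MeasurableSpace Ω] {μ : Measure Ω} [IsProbabilityMeasure μ] {d : ℕ}
  {u : Ω → EuclideanSpace ℝ (Fin d)} {κ : ℝ}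

lemma norm_sq_Tmap_mul_eq_sum (b : EuclideanSpace ℝ (Fin d)) (C : Matrix (Fin d) (Fin d) ℝ)
    (v : EuclideanSpace ℝ (Fin d)) :
    ‖Tmap (param b C) v‖ ^ 2 * (1 + ‖v‖ ^ 2) =
      ∑ i, (∑ j, C i j * v j + b i) ^ 2 * (1 + ∑ k, v k ^ 2) := by
  simp only [EuclideanSpace.real_norm_sq_eq, Tmap_apply, param_apply_inl, param_apply_inr,
    Finset.sum_mul]

lemma IsStandardized.integrable_norm_sq_Tmap_mul (hu : IsStandardized μ (fun i ω => u ω i) κ)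
    (b : EuclideanSpace ℝ (Fin d)) (C : Matrix (Fin d) (Fin d) ℝ) :
    Integrable (fun ω => ‖Tmap (param b C) (u ω)‖ ^ 2 * (1 + ‖u ω‖ ^ 2)) μ := by
  simp only [norm_sq_Tmap_mul_eq_sum]
  exact integrable_finsetSum _ fun i _ => hu.integrable_sq_affine_mul_one_add_sum_sq (C i) (b i)

lemma IsStandardized.integral_norm_sq_Tmap_mul (hu : IsStandardized μ (fun i ω => u ω i) κ)
    (b : EuclideanSpace ℝ (Fin d)) (C : Matrix (Fin d) (Fin d) ℝ) :
    ∫ ω, ‖Tmap (param b C) (u ω)‖ ^ 2 * (1 + ‖u ω‖ ^ 2) ∂μ =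
      (d + 1) * ‖b‖ ^ 2 + (d + κ) * ∑ i, ∑ j, C i j ^ 2 := by
  simp only [norm_sq_Tmap_mul_eq_sum]
  rw [integral_finsetSum _ fun i _ => hu.integrable_sq_affine_mul_one_add_sum_sq (C i) (b i)]
  simp only [hu.integral_sq_affine_mul_one_add_sum_sq, Fintype.card_fin, Finset.sum_add_distrib,
    ← Finset.mul_sum, EuclideanSpace.real_norm_sq_eq]

end Bound

theorem stmt_7_general {Ω : Type*} [MeasurableSpace Ω] (μ : Measure Ω) [IsProbabilityMeasure μ]
    (d : ℕ) (hd : 0 < d) (u : Ω → EuclideanSpace ℝ (Fin d))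
    (hmeas : ∀ i, Measurable fun ω => u ω i)
    (hindep : iIndepFun (fun i ω => u ω i) μ)
    (hident : ∀ i j : Fin d, IdentDistrib (fun ω => u ω i) (fun ω => u ω j) μ μ)
    (hmean : ∀ i, ∫ ω, u ω i ∂μ = 0)
    (hthird : ∀ i, ∫ ω, u ω i ^ 3 ∂μ = 0)
    (hvar : ∀ i, ∫ ω, u ω i ^ 2 ∂μ = 1)
    (hL4 : ∀ i, MemLp (fun ω => u ω i) 4 μ)
    (κ : ℝ) (hκ : κ = ∫ ω, u ω ⟨0, hd⟩ ^ 4 ∂μ)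
    (f : EuclideanSpace ℝ (Fin d) → ℝ) (hf : Differentiable ℝ f)
    (M : ℝ)
    (hsmooth : ∀ y z : EuclideanSpace ℝ (Fin d),
      ‖gradient f y - gradient f z‖ ≤ M * ‖y - z‖)
    (zbar : EuclideanSpace ℝ (Fin d)) (hstat : gradient f zbar = 0)
    (m : EuclideanSpace ℝ (Fin d)) (C : Matrix (Fin d) (Fin d) ℝ) :
    ∫ ω, ‖gradient (fun w' => f (Tmap w' (u ω))) (param m C)‖ ^ 2 ∂μ
      ≤ M ^ 2 * (((d : ℝ) + 1) * ‖m - zbar‖ ^ 2 + ((d : ℝ) + κ) * ∑ i, ∑ j, C i j ^ 2) := by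
  have hfourth : ∀ i, ∫ ω, u ω i ^ 4 ∂μ = κ := fun i =>
    hκ ▸ ((hident i ⟨0, hd⟩).comp (measurable_id.pow_const 4)).integral_eq
  have hu : IsStandardized μ (fun i ω => u ω i) κ :=
    ⟨hmeas, hindep, hmean, hthird, hvar, hfourth, hL4⟩
  have hbound : ∀ ω, ‖gradient (fun w' => f (Tmap w' (u ω))) (param m C)‖ ^ 2 ≤
      M ^ 2 * (‖Tmap (param (m - zbar) C) (u ω)‖ ^ 2 * (1 + ‖u ω‖ ^ 2)) := fun ω => by
    have hgrad : ‖gradient f (Tmap (param m C) (u ω))‖ ≤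
        M * ‖Tmap (param (m - zbar) C) (u ω)‖ := by
      simpa only [hstat, sub_zero, Tmap_param_sub] using hsmooth (Tmap (param m C) (u ω)) zbar
    rw [norm_sq_gradient_Tmap_comp hf.differentiableAt, ← mul_assoc, ← mul_pow]
    gcongr
  calc ∫ ω, ‖gradient (fun w' => f (Tmap w' (u ω))) (param m C)‖ ^ 2 ∂μ
      ≤ ∫ ω, M ^ 2 * (‖Tmap (param (m - zbar) C) (u ω)‖ ^ 2 * (1 + ‖u ω‖ ^ 2)) ∂μ :=
        integral_mono_of_nonneg (ae_of_all _ fun _ => by positivity)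
          ((hu.integrable_norm_sq_Tmap_mul _ C).const_mul _) (ae_of_all _ hbound)
    _ = _ := by rw [integral_const_mul, hu.integral_norm_sq_Tmap_mul]

/-- if `f` is `M`-smooth with stationary point `z̄`, `u ∼ s` standardized
with fourth moment `κ`, and `g = ∇_w f(T_w(u))` (gradient with respect to all `d + d²`
parameters `w = (m, C)`), then `E‖g‖₂² ≤ M²((d+1)‖m − z̄‖₂² + (d+κ)‖C‖_F²)`. -/
theorem stmt_7 {Ω : Type*} [MeasurableSpace Ω] (μ : Measure Ω) [IsProbabilityMeasure μ]
    (d : ℕ) (hd : 0 < d) (u : Ω → EuclideanSpace ℝ (Fin d))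
    (hmeas : ∀ i, Measurable fun ω => u ω i)
    (hindep : iIndepFun (fun i ω => u ω i) μ)
    (hident : ∀ i j : Fin d, IdentDistrib (fun ω => u ω i) (fun ω => u ω j) μ μ)
    (hmean : ∀ i, ∫ ω, u ω i ∂μ = 0)
    (hthird : ∀ i, ∫ ω, u ω i ^ 3 ∂μ = 0)
    (hvar : ∀ i, ∫ ω, u ω i ^ 2 ∂μ = 1)
    (hL4 : ∀ i, MemLp (fun ω => u ω i) 4 μ)
    (κ : ℝ) (hκ : κ = ∫ ω, u ω ⟨0, hd⟩ ^ 4 ∂μ)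
    (f : EuclideanSpace ℝ (Fin d) → ℝ) (hf : Differentiable ℝ f)
    (M : ℝ) (hM : 0 ≤ M)
    (hsmooth : ∀ y z : EuclideanSpace ℝ (Fin d),
      ‖gradient f y - gradient f z‖ ≤ M * ‖y - z‖)
    (zbar : EuclideanSpace ℝ (Fin d)) (hstat : gradient f zbar = 0)
    (m : EuclideanSpace ℝ (Fin d)) (C : Matrix (Fin d) (Fin d) ℝ) :
    ∫ ω, ‖gradient (fun w' => f (Tmap w' (u ω))) (param m C)‖ ^ 2 ∂μ
      ≤ M ^ 2 * (((d : ℝ) + 1) * ‖m - zbar‖ ^ 2 + ((d : ℝ) + κ) * ∑ i, ∑ j, C i j ^ 2) :=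
  stmt_7_general μ d hd u hmeas hindep hident hmean hthird hvar hL4 κ hκ f hf M hsmooth zbar hstat m
    C
end
end

section
/- For n = 1, …, N, let M_n ∈ ℝ^{d×d} be symmetric, let f_n : ℝ^d → ℝ be differentiable and M_n-matrix-smooth, and let z̄_n be a stationary point of f_n. Let π be a probability distribution on {1, …, N} with π(n) > 0 for all n, let u ∼ s where s is standardized with fourth moment κ = E[u₁⁴] < ∞, let n ∼ π independent of u, let T_w(u) = Cu + m, and let g = (1/π(n)) ∇_w f_n(T_w(u)) with respect to all d + d² parameters w = (m, C). Then E‖g‖₂² ≤ Σ_{n=1}^N (1/π(n)) ((d+1) ‖M_n(m − z̄_n)‖₂² + (d+κ) ‖M_n C‖_F²). -/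
/-!
The chain rule through `w ↦ T_w(u)` gives `‖∇_w fₙ(T_w u)‖² = (1 + ‖u‖²) ‖∇fₙ(T_w u)‖²`, and
smoothness at the stationary point `z̄ₙ` bounds `‖∇fₙ(Cu + m)‖` by
`‖Mₙ(m - z̄ₙ) + Mₙ C u‖`. For standardized `u`, the functions `1, u₁, …, u_d` are orthogonal both
in `L²` and against the weight `1 + ‖u‖²`, so `E[(1 + ‖u‖²) ‖a + B u‖²]` is computed exactly as
`(d + 1) ‖a‖² + (d + κ) ‖B‖_F²`. Finally, independence of the index `n ∼ π` from `u` turns the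
expectation into `∑ₙ π(n) · π(n)⁻² · E[…]`.
-/

noncomputable section

open MeasureTheory ProbabilityTheory
open scoped RealInnerProductSpace ENNReal

instance ENNReal.HolderTriple.instFourFourTwo : ENNReal.HolderTriple 4 4 2 := ⟨by
  rw [← two_mul, show (4 : ℝ≥0∞) = 2 * 2 by norm_num, ENNReal.mul_inv (by simp) (by simp),
    ← mul_assoc, ENNReal.mul_inv_cancel (by simp) (by simp), one_mul]⟩

section Orthogonal

variable {Ω ι : Type*} [MeasurableSpace Ω] {μ : Measure Ω} [Fintype ι] {w : Ω → ℝ}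
  {Y : ι → Ω → ℝ}

omit [MeasurableSpace Ω] in
lemma mul_sum_sq_eq (c : ι → ℝ) (ω : Ω) :
    w ω * (∑ i, c i * Y i ω) ^ 2 = ∑ i, ∑ j, c i * c j * (w ω * (Y i ω * Y j ω)) := by
  simp_rw [sq, Finset.sum_mul_sum, Finset.mul_sum]
  exact Finset.sum_congr rfl fun i _ => Finset.sum_congr rfl fun j _ => by ring

lemma integrable_mul_sum_sq (hint : ∀ i j, Integrable (fun ω => w ω * (Y i ω * Y j ω)) μ)
    (c : ι → ℝ) : Integrable (fun ω => w ω * (∑ i, c i * Y i ω) ^ 2) μ := by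
  simp_rw [mul_sum_sq_eq]
  exact integrable_finsetSum _ fun i _ => integrable_finsetSum _ fun j _ =>
    (hint i j).const_mul _

lemma integral_mul_sum_sq_of_orthogonal [DecidableEq ι]
    (hint : ∀ i j, Integrable (fun ω => w ω * (Y i ω * Y j ω)) μ) {lam : ι → ℝ}
    (horth : ∀ i j, ∫ ω, w ω * (Y i ω * Y j ω) ∂μ = if i = j then lam i else 0) (c : ι → ℝ) :
    ∫ ω, w ω * (∑ i, c i * Y i ω) ^ 2 ∂μ = ∑ i, c i ^ 2 * lam i := by
  simp_rw [mul_sum_sq_eq]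
  rw [integral_finsetSum _ fun i _ => integrable_finsetSum _ fun j _ => (hint i j).const_mul _]
  refine Finset.sum_congr rfl fun i _ => ?_
  rw [integral_finsetSum _ fun j _ => (hint i j).const_mul _]
  simp [integral_const_mul, horth, sq]

end Orthogonal

structure IsStandardized_s13 {Ω ι : Type*} [MeasurableSpace Ω] (μ : Measure Ω) (X : ι → Ω → ℝ)
    (κ : ℝ) : Prop where
  measurable : ∀ i, Measurable (X i)
  iIndepFun : iIndepFun X μ
  integral_eq_zero : ∀ i, ∫ ω, X i ω ∂μ = 0
  integral_sq : ∀ i, ∫ ω, X i ω ^ 2 ∂μ = 1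
  integral_pow_three : ∀ i, ∫ ω, X i ω ^ 3 ∂μ = 0
  integral_pow_four : ∀ i, ∫ ω, X i ω ^ 4 ∂μ = κ
  memLp_four : ∀ i, MemLp (X i) 4 μ

namespace IsStandardized_s13

variable {Ω ι : Type*} [MeasurableSpace Ω] {μ : Measure Ω} {X : ι → Ω → ℝ} {κ : ℝ}
  (hX : IsStandardized_s13 μ X κ)
include hX

/-- `o.elim 1 X` indexes the family `1, X₁, …, X_d` by `Option ι`, so that an affine function
`a + ∑ bₖ Xₖ` becomes a linear combination `∑ₒ cₒ Yₒ` over an orthonormal family. -/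
lemma memLp_four_option [IsFiniteMeasure μ] (o : Option ι) : MemLp (o.elim 1 X) 4 μ := by
  cases o
  · exact memLp_const 1
  · exact hX.memLp_four _

lemma integrable_sq_mul_option_mul_option [IsFiniteMeasure μ] (j : ι) (o o' : Option ι) :
    Integrable (fun ω => X j ω ^ 2 * (o.elim 1 X ω * o'.elim 1 X ω)) μ := by
  have hsq : MemLp (fun ω => X j ω ^ 2) 2 μ := by
    simpa only [sq] using (hX.memLp_four j).mul' (hX.memLp_four j) (r := 2)
  exact hsq.integrable_mul ((hX.memLp_four_option o').mul' (hX.memLp_four_option o) (r := 2))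

lemma integrable_option_mul_option [IsFiniteMeasure μ] (o o' : Option ι) :
    Integrable (fun ω => o.elim 1 X ω * o'.elim 1 X ω) μ :=
  memLp_one_iff_integrable.1 <|
    ((hX.memLp_four_option o').mul' (hX.memLp_four_option o) (r := 2)).mono_exponent
      (by norm_num)

/-- `X l` is centred and independent of `(X j, X k)`. -/
lemma integral_mul_eq_zero {g : ℝ × ℝ → ℝ} (hg : Measurable g) {j k l : ι} (hj : j ≠ l)
    (hk : k ≠ l) : ∫ ω, g (X j ω, X k ω) * X l ω ∂μ = 0 := by
  have hindep : IndepFun (fun ω => g (X j ω, X k ω)) (X l) μ :=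
    (hX.iIndepFun.indepFun_prodMk hX.measurable j k l hj hk).comp hg measurable_id
  rw [hindep.integral_fun_mul_eq_mul_integral
    (hg.comp ((hX.measurable j).prodMk (hX.measurable k))).aestronglyMeasurable
    (hX.measurable l).aestronglyMeasurable, hX.integral_eq_zero l, mul_zero]

lemma integral_mul [DecidableEq ι] (k l : ι) : ∫ ω, X k ω * X l ω ∂μ = if k = l then 1 else 0 := by
  split_ifs with h
  · subst h
    simpa [sq] using hX.integral_sq k
  · exact hX.integral_mul_eq_zero measurable_fst h h

lemma integral_sq_mul (j k : ι) : ∫ ω, X j ω ^ 2 * X k ω ∂μ = 0 := by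
  by_cases h : j = k
  · subst h
    simpa [pow_succ] using hX.integral_pow_three j
  · exact hX.integral_mul_eq_zero (g := fun p => p.1 ^ 2) (by fun_prop) h h

lemma integral_sq_mul_mul [DecidableEq ι] (j k l : ι) :
    ∫ ω, X j ω ^ 2 * (X k ω * X l ω) ∂μ = if k = l then (if j = k then κ else 1) else 0 := by
  rcases eq_or_ne k l with rfl | hkl
  · rw [if_pos rfl]
    split_ifs with hjk
    · subst hjk
      simp_rw [← hX.integral_pow_four j]
      ring_nf
    · have hindep : IndepFun (fun ω => X j ω ^ 2) (fun ω => X k ω ^ 2) μ :=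
        (hX.iIndepFun.indepFun hjk).comp (measurable_id.pow_const 2) (measurable_id.pow_const 2)
      simp_rw [← sq]
      rw [hindep.integral_fun_mul_eq_mul_integral
        ((hX.measurable j).pow_const 2).aestronglyMeasurable
        ((hX.measurable k).pow_const 2).aestronglyMeasurable, hX.integral_sq, hX.integral_sq,
        one_mul]
  · rw [if_neg hkl]
    rcases eq_or_ne j l with rfl | hjl
    · simp_rw [show ∀ ω, X j ω ^ 2 * (X k ω * X j ω) = X j ω ^ 3 * X k ω from fun ω => by ring]
      exact hX.integral_mul_eq_zero (g := fun p => p.1 ^ 3) (by fun_prop) hkl.symm hkl.symm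
    · simp_rw [← mul_assoc]
      exact hX.integral_mul_eq_zero (g := fun p => p.1 ^ 2 * p.2) (by fun_prop) hjl hkl

lemma integral_option_mul_option [IsProbabilityMeasure μ] [DecidableEq ι] (o o' : Option ι) :
    ∫ ω, o.elim 1 X ω * o'.elim 1 X ω ∂μ = if o = o' then 1 else 0 := by
  rcases o with _ | k <;> rcases o' with _ | l
  · simp
  · simp [hX.integral_eq_zero]
  · simp [hX.integral_eq_zero]
  · simpa using hX.integral_mul k l

lemma integral_sq_mul_option_mul_option [DecidableEq ι] (j : ι) (o o' : Option ι) :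
    ∫ ω, X j ω ^ 2 * (o.elim 1 X ω * o'.elim 1 X ω) ∂μ
      = if o = o' then (if o = some j then κ else 1) else 0 := by
  rcases o with _ | k <;> rcases o' with _ | l
  · simp [hX.integral_sq]
  · simp [hX.integral_sq_mul]
  · simp [hX.integral_sq_mul]
  · simpa [eq_comm] using hX.integral_sq_mul_mul j k l

lemma integrable_weight_mul_option_mul_option [IsFiniteMeasure μ] [Fintype ι] (o o' : Option ι) :
    Integrable (fun ω => (1 + ∑ j, X j ω ^ 2) * (o.elim 1 X ω * o'.elim 1 X ω)) μ := by
  simp_rw [add_mul, one_mul, Finset.sum_mul]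
  exact (hX.integrable_option_mul_option o o').add
    (integrable_finsetSum _ fun j _ => hX.integrable_sq_mul_option_mul_option j o o')

/-- The family `1, X₁, …, X_d` stays orthogonal against the weight `1 + ∑ Xⱼ²`; its diagonal
values `d + 1` and `d + κ` are the constants of the final bound. -/
lemma integral_weight_mul_option_mul_option [IsProbabilityMeasure μ] [Fintype ι] [DecidableEq ι]
    (o o' : Option ι) :
    ∫ ω, (1 + ∑ j, X j ω ^ 2) * (o.elim 1 X ω * o'.elim 1 X ω) ∂μ
      = if o = o' then o.elim ((Fintype.card ι : ℝ) + 1) (fun _ => Fintype.card ι + κ) else 0 := by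
  simp_rw [add_mul, one_mul, Finset.sum_mul]
  rw [integral_add (hX.integrable_option_mul_option o o')
    (integrable_finsetSum _ fun j _ => hX.integrable_sq_mul_option_mul_option j o o'),
    integral_finsetSum _ fun j _ => hX.integrable_sq_mul_option_mul_option j o o',
    hX.integral_option_mul_option]
  simp_rw [hX.integral_sq_mul_option_mul_option]
  split_ifs with h
  · subst h
    rcases o with _ | k
    · simp [add_comm]
    · have hsplit : ∀ j, (if k = j then κ else 1) = 1 + if k = j then κ - 1 else 0 := fun j => by
        split_ifs <;> ring
      simp only [Option.elim_some, if_true, Option.some.injEq, hsplit, Finset.sum_add_distrib,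
        Finset.sum_ite_eq, Finset.mem_univ, Finset.sum_const, Finset.card_univ, nsmul_eq_mul,
        mul_one]
      ring
  · simp

lemma integrable_one_add_sum_sq_mul_sq [IsFiniteMeasure μ] [Fintype ι] (a : ℝ) (b : ι → ℝ) :
    Integrable (fun ω => (1 + ∑ j, X j ω ^ 2) * (a + ∑ k, b k * X k ω) ^ 2) μ := by
  simpa [Fintype.sum_option] using
    integrable_mul_sum_sq hX.integrable_weight_mul_option_mul_option (fun o => o.elim a b)

lemma integral_one_add_sum_sq_mul_sq [IsProbabilityMeasure μ] [Fintype ι] (a : ℝ) (b : ι → ℝ) :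
    ∫ ω, (1 + ∑ j, X j ω ^ 2) * (a + ∑ k, b k * X k ω) ^ 2 ∂μ
      = (Fintype.card ι + 1) * a ^ 2 + (Fintype.card ι + κ) * ∑ k, b k ^ 2 := by
  classical
  have h := integral_mul_sum_sq_of_orthogonal hX.integrable_weight_mul_option_mul_option
    hX.integral_weight_mul_option_mul_option (fun o => o.elim a b)
  simp only [Fintype.sum_option, Option.elim_none, Option.elim_some, Pi.one_apply, mul_one] at h
  rw [h, ← Finset.sum_mul]
  ring

end IsStandardized_s13

section EuclideanMoments

variable {ι η : Type*} [Fintype ι] [DecidableEq ι] [Fintype η]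

lemma one_add_norm_sq_mul_norm_sq_eq (a : EuclideanSpace ℝ η) (B : Matrix η ι ℝ)
    (x : EuclideanSpace ℝ ι) :
    (1 + ‖x‖ ^ 2) * ‖a + Matrix.toEuclideanLin B x‖ ^ 2
      = ∑ i, (1 + ∑ j, x j ^ 2) * (a i + ∑ k, B i k * x k) ^ 2 := by
  simp [EuclideanSpace.real_norm_sq_eq, Finset.mul_sum, Matrix.toLpLin_apply, Matrix.mulVec,
    dotProduct]

variable {Ω : Type*} [MeasurableSpace Ω] {μ : Measure Ω} {κ : ℝ}
  {u : Ω → EuclideanSpace ℝ ι}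

lemma IsStandardized_s13.integrable_one_add_norm_sq_mul_norm_sq [IsFiniteMeasure μ]
    (hu : IsStandardized_s13 μ (fun i ω => u ω i) κ) (a : EuclideanSpace ℝ η) (B : Matrix η ι ℝ) :
    Integrable (fun ω => (1 + ‖u ω‖ ^ 2) * ‖a + Matrix.toEuclideanLin B (u ω)‖ ^ 2) μ := by
  simp_rw [one_add_norm_sq_mul_norm_sq_eq]
  exact integrable_finsetSum _ fun i _ => hu.integrable_one_add_sum_sq_mul_sq (a i) (B i)

lemma IsStandardized_s13.integral_one_add_norm_sq_mul_norm_sq [IsProbabilityMeasure μ]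
    (hu : IsStandardized_s13 μ (fun i ω => u ω i) κ) (a : EuclideanSpace ℝ η) (B : Matrix η ι ℝ) :
    ∫ ω, (1 + ‖u ω‖ ^ 2) * ‖a + Matrix.toEuclideanLin B (u ω)‖ ^ 2 ∂μ
      = (Fintype.card ι + 1) * ‖a‖ ^ 2 + (Fintype.card ι + κ) * ∑ i, ∑ j, B i j ^ 2 := by
  simp_rw [one_add_norm_sq_mul_norm_sq_eq]
  rw [integral_finsetSum _ fun i _ => hu.integrable_one_add_sum_sq_mul_sq (a i) (B i)]
  simp_rw [hu.integral_one_add_sum_sq_mul_sq, EuclideanSpace.real_norm_sq_eq,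
    Finset.sum_add_distrib, Finset.mul_sum]

end EuclideanMoments

section Gradient

variable {E F : Type*} [NormedAddCommGroup E] [InnerProductSpace ℝ E] [CompleteSpace E]
  [NormedAddCommGroup F] [InnerProductSpace ℝ F] [CompleteSpace F]

lemma inner_gradient_comp_continuousLinearMap {f : F → ℝ} (L : E →L[ℝ] F) {x : E}
    (hf : DifferentiableAt ℝ f (L x)) (y : E) :
    ⟪gradient (f ∘ L) x, y⟫ = ⟪gradient f (L x), L y⟫ := by
  rw [inner_gradient_left, inner_gradient_left, fderiv_comp x hf L.differentiableAt, L.fderiv]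
  rfl

end Gradient

section Reparameterization

variable {d : ℕ}

def Tmap.toCLM (v : EuclideanSpace ℝ (Fin d)) :
    EuclideanSpace ℝ (Fin d ⊕ Fin d × Fin d) →L[ℝ] EuclideanSpace ℝ (Fin d) :=
  LinearMap.toContinuousLinearMap
    { toFun := fun w => Tmap w v
      map_add' := fun w w' => by
        ext i
        simp only [Tmap, WithLp.equiv_symm_apply, PiLp.toLp_apply, PiLp.add_apply, add_mul,
          Finset.sum_add_distrib]
        ring
      map_smul' := fun c w => by
        ext i
        simp only [Tmap, WithLp.equiv_symm_apply, PiLp.toLp_apply, PiLp.smul_apply, smul_eq_mul,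
          RingHom.id_apply, Finset.mul_sum, mul_add, mul_assoc] }

lemma Tmap_single_inl (v : EuclideanSpace ℝ (Fin d)) (i : Fin d) :
    Tmap (EuclideanSpace.single (Sum.inl i) 1) v = EuclideanSpace.single i 1 := by
  ext i'
  simp [Tmap]

lemma Tmap_single_inr (v : EuclideanSpace ℝ (Fin d)) (i j : Fin d) :
    Tmap (EuclideanSpace.single (Sum.inr (i, j)) 1) v = EuclideanSpace.single i (v j) := by
  ext i'
  by_cases h : i' = i <;> simp [Tmap, h]

variable {f : EuclideanSpace ℝ (Fin d) → ℝ} {v : EuclideanSpace ℝ (Fin d)}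
  {w : EuclideanSpace ℝ (Fin d ⊕ Fin d × Fin d)}

lemma gradient_comp_Tmap_apply (hf : DifferentiableAt ℝ f (Tmap w v)) (p : Fin d ⊕ Fin d × Fin d) :
    gradient (fun w' => f (Tmap w' v)) w p
      = Sum.elim (fun i => gradient f (Tmap w v) i)
          (fun ij => gradient f (Tmap w v) ij.1 * v ij.2) p := by
  have key : ⟪gradient (fun w' => f (Tmap w' v)) w, EuclideanSpace.single p 1⟫
      = ⟪gradient f (Tmap w v), Tmap (EuclideanSpace.single p 1) v⟫ :=
    inner_gradient_comp_continuousLinearMap (Tmap.toCLM v) hf _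
  rcases p with i | ⟨i, j⟩
  · rw [Tmap_single_inl, EuclideanSpace.inner_single_right,
      EuclideanSpace.inner_single_right] at key
    simpa using key
  · rw [Tmap_single_inr, EuclideanSpace.inner_single_right,
      EuclideanSpace.inner_single_right] at key
    simpa [mul_comm] using key

lemma norm_sq_gradient_comp_Tmap (hf : DifferentiableAt ℝ f (Tmap w v)) :
    ‖gradient (fun w' => f (Tmap w' v)) w‖ ^ 2 = (1 + ‖v‖ ^ 2) * ‖gradient f (Tmap w v)‖ ^ 2 := by
  simp only [EuclideanSpace.real_norm_sq_eq, Fintype.sum_sum_type, Fintype.sum_prod_type,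
    gradient_comp_Tmap_apply hf, Sum.elim_inl, Sum.elim_inr, mul_pow, ← Finset.mul_sum,
    ← Finset.sum_mul]
  ring

lemma Tmap_param (m : EuclideanSpace ℝ (Fin d)) (C : Matrix (Fin d) (Fin d) ℝ) :
    Tmap (param m C) v = Matrix.toEuclideanLin C v + m := by
  ext i
  simp [Tmap, param, Matrix.toLpLin_apply, Matrix.mulVec, dotProduct]

end Reparameterization

lemma norm_sq_gradient_comp_Tmap_param_le {d : ℕ} {f : EuclideanSpace ℝ (Fin d) → ℝ}
    {M : Matrix (Fin d) (Fin d) ℝ} {zbar : EuclideanSpace ℝ (Fin d)} (hf : Differentiable ℝ f)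
    (hsmooth : ∀ y z, ‖gradient f y - gradient f z‖ ≤ ‖Matrix.toEuclideanLin M (y - z)‖)
    (hstat : gradient f zbar = 0) (m v : EuclideanSpace ℝ (Fin d)) (C : Matrix (Fin d) (Fin d) ℝ) :
    ‖gradient (fun w => f (Tmap w v)) (param m C)‖ ^ 2
      ≤ (1 + ‖v‖ ^ 2)
          * ‖Matrix.toEuclideanLin M (m - zbar) + Matrix.toEuclideanLin (M * C) v‖ ^ 2 := by
  rw [norm_sq_gradient_comp_Tmap (hf _)]
  have hgrad := hsmooth (Tmap (param m C) v) zbar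
  rw [hstat, sub_zero, Tmap_param] at hgrad
  have hlin : Matrix.toEuclideanLin M (Matrix.toEuclideanLin C v + m - zbar)
      = Matrix.toEuclideanLin M (m - zbar) + Matrix.toEuclideanLin (M * C) v := by
    rw [Matrix.toLpLin_mul_same, add_sub_assoc, map_add, add_comm]
    rfl
  rw [hlin] at hgrad
  rw [Tmap_param]
  gcongr

section Subsampling

variable {Ω ι E : Type*} [MeasurableSpace Ω] {μ : Measure Ω} [Fintype ι] [MeasurableSpace ι]
  [MeasurableSingletonClass ι] {ν : Ω → ι} {X : Ω → E} {h : ι → E → ℝ}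

omit [MeasurableSpace Ω] [MeasurableSpace ι] [MeasurableSingletonClass ι] in
lemma apply_index_eq_sum_indicator (ω : Ω) :
    h (ν ω) (X ω) = ∑ i, (ν ⁻¹' {i}).indicator (fun ω => h i (X ω)) ω := by
  classical
  simp [Set.indicator_apply]

lemma integrable_apply_index (hν : Measurable ν)
    (hint : ∀ i, Integrable (fun ω => h i (X ω)) μ) :
    Integrable (fun ω => h (ν ω) (X ω)) μ := by
  simp_rw [apply_index_eq_sum_indicator (h := h)]
  exact integrable_finsetSum _ fun i _ => (hint i).indicator (hν (measurableSet_singleton i))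

lemma integral_apply_index_of_indepFun [MeasurableSpace E] [DiscreteMeasurableSpace ι]
    (hν : Measurable ν) (hX : Measurable X) (hh : ∀ i, Measurable (h i))
    (hint : ∀ i, Integrable (fun ω => h i (X ω)) μ) (hindep : IndepFun ν X μ) :
    ∫ ω, h (ν ω) (X ω) ∂μ = ∑ i, μ.real (ν ⁻¹' {i}) * ∫ ω, h i (X ω) ∂μ := by
  simp_rw [apply_index_eq_sum_indicator (h := h)]
  rw [integral_finsetSum _ fun i _ => (hint i).indicator (hν (measurableSet_singleton i))]
  refine Finset.sum_congr rfl fun i _ => ?_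
  have hind : Measurable (({i} : Set ι).indicator (1 : ι → ℝ)) := .of_discrete
  calc ∫ ω, (ν ⁻¹' {i}).indicator (fun ω => h i (X ω)) ω ∂μ
      = ∫ ω, ({i} : Set ι).indicator 1 (ν ω) * h i (X ω) ∂μ := by
        refine integral_congr_ae (.of_forall fun ω => ?_)
        by_cases hω : ν ω = i <;> simp [hω]
    _ = (∫ ω, ({i} : Set ι).indicator (1 : ι → ℝ) (ν ω) ∂μ) * ∫ ω, h i (X ω) ∂μ :=
        (hindep.comp hind (hh i)).integral_fun_mul_eq_mul_integral
          (hind.comp hν).aestronglyMeasurable ((hh i).comp hX).aestronglyMeasurable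
    _ = μ.real (ν ⁻¹' {i}) * ∫ ω, h i (X ω) ∂μ := by
        rw [← integral_indicator_one (hν (measurableSet_singleton i))]
        rfl

end Subsampling

theorem stmt_13_general {Ω : Type*} [MeasurableSpace Ω] (μ : Measure Ω) [IsProbabilityMeasure μ]
    (d N : ℕ) (hd : 0 < d)
    (u : Ω → EuclideanSpace ℝ (Fin d)) (hmeasu : Measurable u)
    (hmeas : ∀ i, Measurable fun ω => u ω i)
    (hindep : iIndepFun (fun i ω => u ω i) μ)
    (hident : ∀ i j : Fin d, IdentDistrib (fun ω => u ω i) (fun ω => u ω j) μ μ)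
    (hmean : ∀ i, ∫ ω, u ω i ∂μ = 0)
    (hthird : ∀ i, ∫ ω, u ω i ^ 3 ∂μ = 0)
    (hvar : ∀ i, ∫ ω, u ω i ^ 2 ∂μ = 1)
    (hL4 : ∀ i, MemLp (fun ω => u ω i) 4 μ)
    (κ : ℝ) (hκ : κ = ∫ ω, u ω ⟨0, hd⟩ ^ 4 ∂μ)
    (M : Fin N → Matrix (Fin d) (Fin d) ℝ)
    (f : Fin N → EuclideanSpace ℝ (Fin d) → ℝ) (hf : ∀ n, Differentiable ℝ (f n))
    (hsmooth : ∀ n, ∀ y z : EuclideanSpace ℝ (Fin d),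
      ‖gradient (f n) y - gradient (f n) z‖ ≤ ‖Matrix.toEuclideanLin (M n) (y - z)‖)
    (zbar : Fin N → EuclideanSpace ℝ (Fin d)) (hstat : ∀ n, gradient (f n) (zbar n) = 0)
    (π : Fin N → ℝ) (hπpos : ∀ n, 0 < π n)
    (ν : Ω → Fin N) (hν : Measurable ν)
    (hνdist : ∀ n, μ (ν ⁻¹' {n}) = ENNReal.ofReal (π n))
    (hνindep : IndepFun ν u μ)
    (m : EuclideanSpace ℝ (Fin d)) (C : Matrix (Fin d) (Fin d) ℝ) :
    ∫ ω, ‖(π (ν ω))⁻¹ •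
        gradient (fun w' => f (ν ω) (Tmap w' (u ω))) (param m C)‖ ^ 2 ∂μ
      ≤ ∑ n, (π n)⁻¹ *
          (((d : ℝ) + 1) * ‖Matrix.toEuclideanLin (M n) (m - zbar n)‖ ^ 2
            + ((d : ℝ) + κ) * ∑ i, ∑ j, (M n * C) i j ^ 2) := by
  have hu : IsStandardized_s13 μ (fun i ω => u ω i) κ :=
    { measurable := hmeas
      iIndepFun := hindep
      integral_eq_zero := hmean
      integral_sq := hvar
      integral_pow_three := hthird
      integral_pow_four := fun i =>
        hκ ▸ ((hident i ⟨0, hd⟩).comp (measurable_id.pow_const 4)).integral_eq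
      memLp_four := hL4 }
  set H : Fin N → EuclideanSpace ℝ (Fin d) → ℝ := fun n x => (π n)⁻¹ ^ 2 * ((1 + ‖x‖ ^ 2)
    * ‖Matrix.toEuclideanLin (M n) (m - zbar n) + Matrix.toEuclideanLin (M n * C) x‖ ^ 2)
  have hHint : ∀ n, Integrable (fun ω => H n (u ω)) μ := fun n =>
    (hu.integrable_one_add_norm_sq_mul_norm_sq _ _).const_mul _
  have hbound : ∀ ω, ‖(π (ν ω))⁻¹ • gradient (fun w' => f (ν ω) (Tmap w' (u ω))) (param m C)‖ ^ 2
      ≤ H (ν ω) (u ω) := fun ω => by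
    rw [norm_smul, mul_pow, Real.norm_eq_abs, sq_abs]
    exact mul_le_mul_of_nonneg_left
      (norm_sq_gradient_comp_Tmap_param_le (hf _) (hsmooth _) (hstat _) m (u ω) C) (sq_nonneg _)
  calc _ ≤ ∫ ω, H (ν ω) (u ω) ∂μ :=
        integral_mono_of_nonneg (.of_forall fun _ => by positivity)
          (integrable_apply_index hν hHint) (.of_forall hbound)
    _ = ∑ n, μ.real (ν ⁻¹' {n}) * ∫ ω, H n (u ω) ∂μ :=
        integral_apply_index_of_indepFun hν hmeasu (fun n => by fun_prop) hHint hνindep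
    _ = _ := Finset.sum_congr rfl fun n _ => by
        rw [measureReal_def, hνdist, ENNReal.toReal_ofReal (hπpos n).le, integral_const_mul,
          hu.integral_one_add_norm_sq_mul_norm_sq, Fintype.card_fin]
        field_simp [(hπpos n).ne']

/-- subsampling bound. If each `fₙ` is `Mₙ`-matrix-smooth with stationary
point `z̄ₙ`, `u` is standardized with fourth moment `κ`, and `n ∼ π` is sampled
independently of `u`, then the estimator `g = (1/π(n)) ∇_w fₙ(T_w(u))` satisfies
`E‖g‖₂² ≤ Σₙ (1/π(n)) ((d+1)‖Mₙ(m − z̄ₙ)‖₂² + (d+κ)‖Mₙ C‖_F²)`. -/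
theorem stmt_13 {Ω : Type*} [MeasurableSpace Ω] (μ : Measure Ω) [IsProbabilityMeasure μ]
    (d N : ℕ) (hd : 0 < d) (hN : 0 < N)
    (u : Ω → EuclideanSpace ℝ (Fin d)) (hmeasu : Measurable u)
    (hmeas : ∀ i, Measurable fun ω => u ω i)
    (hindep : iIndepFun (fun i ω => u ω i) μ)
    (hident : ∀ i j : Fin d, IdentDistrib (fun ω => u ω i) (fun ω => u ω j) μ μ)
    (hmean : ∀ i, ∫ ω, u ω i ∂μ = 0)
    (hthird : ∀ i, ∫ ω, u ω i ^ 3 ∂μ = 0)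
    (hvar : ∀ i, ∫ ω, u ω i ^ 2 ∂μ = 1)
    (hL4 : ∀ i, MemLp (fun ω => u ω i) 4 μ)
    (κ : ℝ) (hκ : κ = ∫ ω, u ω ⟨0, hd⟩ ^ 4 ∂μ)
    (M : Fin N → Matrix (Fin d) (Fin d) ℝ) (hMsymm : ∀ n, (M n).IsSymm)
    (f : Fin N → EuclideanSpace ℝ (Fin d) → ℝ) (hf : ∀ n, Differentiable ℝ (f n))
    (hsmooth : ∀ n, ∀ y z : EuclideanSpace ℝ (Fin d),
      ‖gradient (f n) y - gradient (f n) z‖ ≤ ‖Matrix.toEuclideanLin (M n) (y - z)‖)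
    (zbar : Fin N → EuclideanSpace ℝ (Fin d)) (hstat : ∀ n, gradient (f n) (zbar n) = 0)
    (π : Fin N → ℝ) (hπpos : ∀ n, 0 < π n) (hπsum : ∑ n, π n = 1)
    (ν : Ω → Fin N) (hν : Measurable ν)
    (hνdist : ∀ n, μ (ν ⁻¹' {n}) = ENNReal.ofReal (π n))
    (hνindep : IndepFun ν u μ)
    (m : EuclideanSpace ℝ (Fin d)) (C : Matrix (Fin d) (Fin d) ℝ) :
    ∫ ω, ‖(π (ν ω))⁻¹ •
        gradient (fun w' => f (ν ω) (Tmap w' (u ω))) (param m C)‖ ^ 2 ∂μ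
      ≤ ∑ n, (π n)⁻¹ *
          (((d : ℝ) + 1) * ‖Matrix.toEuclideanLin (M n) (m - zbar n)‖ ^ 2
            + ((d : ℝ) + κ) * ∑ i, ∑ j, (M n * C) i j ^ 2) :=
  stmt_13_general μ d N hd u hmeasu hmeas hindep hident hmean hthird hvar hL4 κ hκ M f hf hsmooth
    zbar hstat π hπpos ν hν hνdist hνindep m C
end
end
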